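/- arXiv:1404.4386 — 4 statements merged into one kernel-verified Lean document; each statement's English description precedes it below -/
import Mathlib

section
/- Let p be the Gaussian density on ℝ^d with mean μ and symmetric positive definite covariance matrix Σ, and let h(x) = Hx be linear. For each j ∈ {1,…,s} define φ_j(x) = (Σ Hᵀ e_j) · (x − μ), where e_j is the j-th standard basis vector of ℝ^s. Then: (i) ∇φ_j(x) = Σ Hᵀ e_j for all x (so the gain matrix K = [∇φ_1, …, ∇φ_s] equals Σ Hᵀ); (ii) ∇ · (p ∇φ_j)(x) = −(h_j(x) − (Hμ)_j) p(x) for every x ∈ ℝ^d; and (iii) ∫_{ℝ^d} φ_j(x) p(x) dx = 0. In particular φ_j solves the Euler–Lagrange boundary value problem for the gain function in the linear-Gaussian case. -/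
/-!
With `v = Σ Hᵀ e_j` constant, `∇·(p v) = ∇p · v`, and `∇p(x) = -p(x) Σ⁻¹ (x - μ)`, so the
divergence is `-p(x) (x - μ) · Σ⁻¹ Σ Hᵀ e_j = -p(x) (H (x - μ))_j`. The mean of `φ_j` vanishes
because under the reflection `x ↦ 2μ - x`, which preserves Lebesgue measure, `φ_j` is odd and
`p` is even.
-/

open MeasureTheory Matrix

section Symmetry

variable {G E : Type*} [MeasurableSpace G] [AddGroup G] [MeasurableAdd G] [MeasurableNeg G]
  [NormedAddCommGroup E] [NormedSpace ℝ E] (ν : Measure G) [ν.IsNegInvariant] [ν.IsAddLeftInvariant]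

theorem integral_eq_zero_of_sub_left_eq_neg {f : G → E} (c : G) (hf : ∀ x, f (c - x) = -f x) :
    ∫ x, f x ∂ν = 0 := by
  have h := integral_sub_left_eq_self f ν c
  simp only [hf, integral_neg] at h
  have : IsAddTorsionFree E := .of_isTorsionFree ℝ E
  exact neg_eq_self.mp h

end Symmetry

namespace Matrix

variable {n : Type*} [Fintype n]

theorem hasFDerivAt_dotProduct_sub_const (v μ x : n → ℝ) :
    HasFDerivAt (fun y => v ⬝ᵥ (y - μ))
      (LinearMap.toContinuousLinearMap (dotProductBilin ℝ ℝ v)) x :=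
  (LinearMap.toContinuousLinearMap (dotProductBilin ℝ ℝ v)).hasFDerivAt.comp x
    ((hasFDerivAt_id x).sub_const μ)

variable [DecidableEq n]

noncomputable def toContinuousBilin (A : Matrix n n ℝ) : (n → ℝ) →L[ℝ] (n → ℝ) →L[ℝ] ℝ :=
  LinearMap.toContinuousLinearMap
    (LinearMap.toContinuousLinearMap.toLinearMap ∘ₗ toLinearMap₂' ℝ A)

@[simp]
theorem toContinuousBilin_apply (A : Matrix n n ℝ) (u w : n → ℝ) :
    A.toContinuousBilin u w = u ⬝ᵥ A *ᵥ w := by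
  simp [toContinuousBilin, toLinearMap₂'_apply']

theorem IsSymm.hasFDerivAt_sub_dotProduct_mulVec_sub {A : Matrix n n ℝ} (hA : A.IsSymm)
    (μ x : n → ℝ) :
    HasFDerivAt (fun y => (y - μ) ⬝ᵥ A *ᵥ (y - μ)) (2 • A.toContinuousBilin (x - μ)) x := by
  have h := A.toContinuousBilin.hasFDerivAt_of_bilinear
    ((hasFDerivAt_id x).sub_const μ) ((hasFDerivAt_id x).sub_const μ)
  simp only [toContinuousBilin_apply, id] at h
  refine h.congr_fderiv (ContinuousLinearMap.ext fun w => ?_)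
  have hcomm : w ⬝ᵥ A *ᵥ (x - μ) = (x - μ) ⬝ᵥ A *ᵥ w := by
    rw [dotProduct_mulVec, dotProduct_comm, ← mulVec_transpose, hA.eq]
  simp only [ContinuousLinearMap.precompR_apply, ContinuousLinearMap.compL_apply,
    ContinuousLinearMap.comp_id, _root_.add_apply, toContinuousBilin_apply,
    ContinuousLinearMap.precompL_apply, ContinuousLinearMap.id_apply, hcomm, two_smul]

theorem IsSymm.hasFDerivAt_gaussian {A : Matrix n n ℝ} (hA : A.IsSymm) (C : ℝ) (μ x : n → ℝ) :
    HasFDerivAt (fun y => C * Real.exp (-((y - μ) ⬝ᵥ A *ᵥ (y - μ)) / 2))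
      (-(C * Real.exp (-((x - μ) ⬝ᵥ A *ᵥ (x - μ)) / 2)) • A.toContinuousBilin (x - μ)) x := by
  have h :=
    ((hA.hasFDerivAt_sub_dotProduct_mulVec_sub μ x).fun_neg.mul_const (2⁻¹ : ℝ)).exp.const_mul C
  simp only [← div_eq_mul_inv] at h
  refine h.congr_fderiv ?_
  ext w
  simp only [_root_.smul_apply, _root_.neg_apply, toContinuousBilin_apply, smul_eq_mul,
    nsmul_eq_mul]
  ring

theorem dotProduct_inv_mulVec_mul_transpose_mulVec_single {A : Matrix n n ℝ} {m : Type*}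
    [Fintype m] [DecidableEq m] (hA : IsUnit A.det) (H : Matrix m n ℝ) (u : n → ℝ) (j : m) :
    u ⬝ᵥ A⁻¹ *ᵥ ((A * Hᵀ) *ᵥ Pi.single j 1) = (H *ᵥ u) j := by
  rw [mulVec_mulVec, nonsing_inv_mul_cancel_left _ _ hA, dotProduct_mulVec, vecMul_transpose,
    dotProduct_single_one]

end Matrix

theorem sum_fderiv_mul_const_apply_single {n : Type*} [Fintype n] [DecidableEq n]
    {f : (n → ℝ) → ℝ} {x : n → ℝ} (hf : DifferentiableAt ℝ f x) (v : n → ℝ) :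
    ∑ l, fderiv ℝ (fun y => f y * v l) x (Pi.single l 1) = fderiv ℝ f x v := by
  conv_rhs => rw [← (Pi.basisFun ℝ n).sum_repr v]
  simp [fderiv_mul_const hf]

/-- In the linear-Gaussian case, `φ_j(x) = (Σ Hᵀ e_j) ⬝ (x - μ)` solves the
Euler–Lagrange boundary value problem for the gain function: its gradient is the
constant `Σ Hᵀ e_j`, it satisfies `∇·(p ∇φ_j) = -(h_j - ĥ_j) p`, and it has zero
mean with respect to the Gaussian density `p`. -/
theorem stmt_0 (d s : ℕ)
    (Sig : Matrix (Fin d) (Fin d) ℝ) (hSym : Sig.IsSymm) (hPD : Sig.PosDef)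
    (μ : Fin d → ℝ) (H : Matrix (Fin s) (Fin d) ℝ)
    (p : (Fin d → ℝ) → ℝ)
    (hp : ∀ x, p x = (2 * Real.pi) ^ (-(d : ℝ) / 2) * Sig.det ^ (-(1 : ℝ) / 2) *
      Real.exp (-((x - μ) ⬝ᵥ (Sig⁻¹).mulVec (x - μ)) / 2))
    (j : Fin s)
    (φ : (Fin d → ℝ) → ℝ)
    (hφ : ∀ x, φ x = ((Sig * Hᵀ).mulVec (Pi.single j 1)) ⬝ᵥ (x - μ)) :
    -- (i) the gradient of φ_j is the constant vector Σ Hᵀ e_j (so K = Σ Hᵀ)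
    (∀ x l, fderiv ℝ φ x (Pi.single l 1) = (Sig * Hᵀ) l j) ∧
    -- (ii) ∇·(p ∇φ_j) = -(h_j - ĥ_j) p pointwise
    (∀ x, (∑ l, fderiv ℝ (fun y => p y * (Sig * Hᵀ) l j) x (Pi.single l 1))
        = -((H.mulVec x j - H.mulVec μ j) * p x)) ∧
    -- (iii) φ_j has zero mean against p
    (∫ x, φ x * p x) = 0 := by
  set v := (Sig * Hᵀ) *ᵥ Pi.single j 1
  have hv : ∀ l, (Sig * Hᵀ) l j = v l := fun l => by simp [v]
  have hp_diff : ∀ x, HasFDerivAt p (-p x • Sig⁻¹.toContinuousBilin (x - μ)) x := fun x => by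
    rw [hp x, funext hp]
    exact hSym.inv.hasFDerivAt_gaussian _ μ x
  refine ⟨fun x l => ?_, fun x => ?_, ?_⟩
  · rw [funext hφ, (hasFDerivAt_dotProduct_sub_const v μ x).fderiv, hv]
    simp
  · simp only [hv]
    rw [sum_fderiv_mul_const_apply_single (hp_diff x).differentiableAt, (hp_diff x).fderiv,
      _root_.smul_apply, toContinuousBilin_apply,
      dotProduct_inv_mulVec_mul_transpose_mulVec_single (isUnit_iff_ne_zero.2 hPD.det_pos.ne'),
      mulVec_sub, Pi.sub_apply, smul_eq_mul]
    ring
  · refine integral_eq_zero_of_sub_left_eq_neg volume (μ + μ) fun x => ?_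
    have hreflect : μ + μ - x - μ = -(x - μ) := by abel
    simp only [hφ, hp, hreflect, dotProduct_neg, neg_dotProduct, mulVec_neg, neg_neg, neg_mul]
end

section
/- Let p be a Borel probability measure on ℝ^d with finite second moment, h_j : ℝ^d → ℝ bounded measurable with mean ĥ_j = ∫ h_j dp, and let φ be a weak solution of the gain equation. Then the function c ↦ ∫ |∇φ(x) − c|² dp(x) over constant vectors c ∈ ℝ^d attains its minimum at the unique point c* = ∫ (h_j(x) − ĥ_j) x dp(x); i.e., the constant gain approximation is the best constant approximation, in the least-squares sense over p, of the exact gain function ∇φ. -/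
/-!
Testing the weak form of the gain equation against the coordinate functions `ψ = x_l` shows
that the `p`-mean of `∂_l φ` is `∫ (h - ĥ) x_l dp = c*_l`. The bias–variance decomposition
`∫ |∇φ - c|² dp = ∑_l Var_p[∂_l φ] + |𝔼_p[∇φ] - c|²` then shows that the least-squares
objective is minimised exactly at the mean of `∇φ`, i.e. at `c*`.
-/

open MeasureTheory ProbabilityTheory

section LeastSquares

variable {Ω ι : Type*} [MeasurableSpace Ω] {μ : Measure Ω} [Fintype ι] {g : ι → Ω → ℝ}

lemma memLp_two_of_integrable_sum_sq (hg : ∀ l, AEStronglyMeasurable (g l) μ)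
    (hsum : Integrable (fun ω => ∑ l, g l ω ^ 2) μ) (l : ι) : MemLp (g l) 2 μ := by
  refine (memLp_two_iff_integrable_sq (hg l)).mpr <|
    hsum.mono' ((hg l).pow 2) (Filter.Eventually.of_forall fun ω => ?_)
  rw [Real.norm_eq_abs, abs_of_nonneg (sq_nonneg _)]
  exact Finset.single_le_sum (fun k _ => sq_nonneg (g k ω)) (Finset.mem_univ l)

variable [IsProbabilityMeasure μ]

lemma integral_sub_const_sq {X : Ω → ℝ} (hX : MemLp X 2 μ) (a : ℝ) :
    ∫ ω, (X ω - a) ^ 2 ∂μ = Var[X; μ] + (μ[X] - a) ^ 2 := by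
  have hXa : MemLp (fun ω => X ω - a) 2 μ := hX.sub (memLp_const a)
  have hmean : μ[fun ω => X ω - a] = μ[X] - a := by
    rw [integral_sub (hX.integrable one_le_two) (integrable_const a), integral_const]
    simp
  rw [← variance_sub_const hX.aestronglyMeasurable a, variance_eq_sub hXa, hmean]
  simp only [Pi.pow_apply]
  ring

lemma integral_sum_sub_sq (hg : ∀ l, MemLp (g l) 2 μ) (c : ι → ℝ) :
    ∫ ω, ∑ l, (g l ω - c l) ^ 2 ∂μ = ∑ l, Var[g l; μ] + ∑ l, (μ[g l] - c l) ^ 2 := by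
  rw [integral_finsetSum _ fun l _ =>
      MemLp.integrable_sq (f := fun ω => g l ω - c l) ((hg l).sub (memLp_const (c l))),
    ← Finset.sum_add_distrib]
  exact Finset.sum_congr rfl fun l _ => integral_sub_const_sq (hg l) (c l)

lemma integral_sum_sub_sq_eq_add (hg : ∀ l, MemLp (g l) 2 μ) (c : ι → ℝ) :
    ∫ ω, ∑ l, (g l ω - c l) ^ 2 ∂μ
      = ∫ ω, ∑ l, (g l ω - μ[g l]) ^ 2 ∂μ + ∑ l, (μ[g l] - c l) ^ 2 := by
  rw [integral_sum_sub_sq hg, integral_sum_sub_sq hg]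
  simp

lemma integral_sum_sub_mean_sq_le (hg : ∀ l, MemLp (g l) 2 μ) (c : ι → ℝ) :
    ∫ ω, ∑ l, (g l ω - μ[g l]) ^ 2 ∂μ ≤ ∫ ω, ∑ l, (g l ω - c l) ^ 2 ∂μ := by
  rw [integral_sum_sub_sq_eq_add hg c]
  exact le_add_of_nonneg_right (Finset.sum_nonneg fun l _ => sq_nonneg _)

lemma eq_mean_of_integral_sum_sub_sq_eq (hg : ∀ l, MemLp (g l) 2 μ)
    {c : ι → ℝ}
    (hc : ∫ ω, ∑ l, (g l ω - c l) ^ 2 ∂μ = ∫ ω, ∑ l, (g l ω - μ[g l]) ^ 2 ∂μ) :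
    c = fun l => μ[g l] := by
  rw [integral_sum_sub_sq_eq_add hg c, add_eq_left,
    Finset.sum_eq_zero_iff_of_nonneg fun l _ => sq_nonneg _] at hc
  funext l
  simpa [sub_eq_zero, eq_comm] using hc l (Finset.mem_univ l)

end LeastSquares

section GainEquation

lemma fderiv_eval_apply {ι : Type*} (l : ι) (x v : ι → ℝ) :
    fderiv ℝ (fun y : ι → ℝ => y l) x v = v l := by
  rw [(hasFDerivAt_apply l x).fderiv]
  rfl

variable {ι : Type*} [Fintype ι] {p : Measure (ι → ℝ)}

lemma memLp_two_eval_of_integrable_norm_sq (hmom : Integrable (fun x : ι → ℝ => ‖x‖ ^ 2) p)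
    (l : ι) : MemLp (fun x : ι → ℝ => x l) 2 p :=
  memLp_pi_iff.mp ((memLp_two_iff_integrable_sq_norm aestronglyMeasurable_id).mpr hmom) l

lemma integral_fderiv_single_eq_of_weak [DecidableEq ι] [IsFiniteMeasure p] {φ q : (ι → ℝ) → ℝ}
    (hmom : Integrable (fun x : ι → ℝ => ‖x‖ ^ 2) p)
    (hweak : ∀ ψ : (ι → ℝ) → ℝ, ContDiff ℝ 1 ψ →
      Integrable (fun x => (ψ x) ^ 2) p →
      Integrable (fun x => ∑ l, (fderiv ℝ ψ x (Pi.single l 1)) ^ 2) p →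
      (∫ x, (∑ l, fderiv ℝ φ x (Pi.single l 1) * fderiv ℝ ψ x (Pi.single l 1)) ∂p)
        = ∫ x, q x * ψ x ∂p)
    (l : ι) : ∫ x, fderiv ℝ φ x (Pi.single l 1) ∂p = ∫ x, q x * x l ∂p := by
  have hpairing : ∀ x, ∑ k, fderiv ℝ φ x (Pi.single k 1) * fderiv ℝ (fun y : ι → ℝ => y l) x
      (Pi.single k 1) = fderiv ℝ φ x (Pi.single l 1) := by
    intro x
    simp [fderiv_eval_apply, Pi.single_apply]
  have hgrad_sq : ∀ x, ∑ k, fderiv ℝ (fun y : ι → ℝ => y l) x (Pi.single k 1) ^ 2 = 1 := by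
    intro x
    simp [fderiv_eval_apply, Pi.single_apply]
  have := hweak (fun x => x l) (contDiff_apply ℝ ℝ l)
    (memLp_two_eval_of_integrable_norm_sq hmom l).integrable_sq
    (by simpa only [hgrad_sq] using integrable_const (1 : ℝ))
  simpa only [hpairing] using this

end GainEquation

theorem stmt_3_general (d : ℕ) (p : Measure (Fin d → ℝ)) [IsProbabilityMeasure p]
    (hmom : Integrable (fun x : Fin d → ℝ => ‖x‖ ^ 2) p)
    (h : (Fin d → ℝ) → ℝ) (hmeas : Measurable h) (C : ℝ) (hbdd : ∀ x, |h x| ≤ C)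
    (φ : (Fin d → ℝ) → ℝ)
    (hgradL2 : Integrable (fun x => ∑ l, (fderiv ℝ φ x (Pi.single l 1)) ^ 2) p)
    (hweak : ∀ ψ : (Fin d → ℝ) → ℝ, ContDiff ℝ 1 ψ →
      Integrable (fun x => (ψ x) ^ 2) p →
      Integrable (fun x => ∑ l, (fderiv ℝ ψ x (Pi.single l 1)) ^ 2) p →
      (∫ x, (∑ l, fderiv ℝ φ x (Pi.single l 1) * fderiv ℝ ψ x (Pi.single l 1)) ∂p)
        = ∫ x, (h x - ∫ y, h y ∂p) * ψ x ∂p)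
    (cstar : Fin d → ℝ)
    (hcstar : cstar = ∫ x, (h x - ∫ y, h y ∂p) • x ∂p) :
    (∀ c : Fin d → ℝ,
        (∫ x, ∑ l, (fderiv ℝ φ x (Pi.single l 1) - cstar l) ^ 2 ∂p)
          ≤ ∫ x, ∑ l, (fderiv ℝ φ x (Pi.single l 1) - c l) ^ 2 ∂p) ∧
    (∀ c : Fin d → ℝ,
        (∫ x, ∑ l, (fderiv ℝ φ x (Pi.single l 1) - c l) ^ 2 ∂p)
          = (∫ x, ∑ l, (fderiv ℝ φ x (Pi.single l 1) - cstar l) ^ 2 ∂p) → c = cstar) := by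
  have hgrad : ∀ l, MemLp (fun x => fderiv ℝ φ x (Pi.single l 1)) 2 p :=
    memLp_two_of_integrable_sum_sq
      (fun l => (measurable_fderiv_apply_const ℝ φ _).aestronglyMeasurable) hgradL2
  have hsource : MemLp (fun x => h x - ∫ y, h y ∂p) ⊤ p :=
    (memLp_top_of_bound hmeas.aestronglyMeasurable C (Filter.Eventually.of_forall hbdd)).sub
      (memLp_const _)
  have hint : ∀ k, Integrable (fun x => (h x - ∫ y, h y ∂p) * x k) p := fun k =>
    ((memLp_two_eval_of_integrable_norm_sq hmom k).integrable one_le_two).mul_of_top_right hsource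
  have hmean : (fun l => ∫ x, fderiv ℝ φ x (Pi.single l 1) ∂p) = cstar := by
    funext l
    rw [integral_fderiv_single_eq_of_weak hmom hweak, hcstar,
      eval_integral (f := fun x => (h x - ∫ y, h y ∂p) • x) hint]
    simp only [Pi.smul_apply, smul_eq_mul]
  subst hmean
  exact ⟨integral_sum_sub_mean_sq_le hgrad, fun c => eq_mean_of_integral_sum_sub_sq_eq hgrad⟩

/-- If `φ` is a weak solution of the gain equation, then the least-squares problem
`min_{c ∈ ℝ^d} ∫ |∇φ(x) - c|² dp(x)` over constant vectors attains its minimum at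
the unique point `c* = ∫ (h_j(x) - ĥ_j) x dp(x)`: the constant gain approximation
is the best constant approximation of the exact gain `∇φ`. -/
theorem stmt_3 (d : ℕ) (p : Measure (Fin d → ℝ)) [IsProbabilityMeasure p]
    (hmom : Integrable (fun x : Fin d → ℝ => ‖x‖ ^ 2) p)
    (h : (Fin d → ℝ) → ℝ) (hmeas : Measurable h) (C : ℝ) (hbdd : ∀ x, |h x| ≤ C)
    (φ : (Fin d → ℝ) → ℝ) (hφ : ContDiff ℝ 1 φ)
    (hgradL2 : Integrable (fun x => ∑ l, (fderiv ℝ φ x (Pi.single l 1)) ^ 2) p)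
    (hweak : ∀ ψ : (Fin d → ℝ) → ℝ, ContDiff ℝ 1 ψ →
      Integrable (fun x => (ψ x) ^ 2) p →
      Integrable (fun x => ∑ l, (fderiv ℝ ψ x (Pi.single l 1)) ^ 2) p →
      (∫ x, (∑ l, fderiv ℝ φ x (Pi.single l 1) * fderiv ℝ ψ x (Pi.single l 1)) ∂p)
        = ∫ x, (h x - ∫ y, h y ∂p) * ψ x ∂p)
    (cstar : Fin d → ℝ)
    (hcstar : cstar = ∫ x, (h x - ∫ y, h y ∂p) • x ∂p) :
    (∀ c : Fin d → ℝ,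
        (∫ x, ∑ l, (fderiv ℝ φ x (Pi.single l 1) - cstar l) ^ 2 ∂p)
          ≤ ∫ x, ∑ l, (fderiv ℝ φ x (Pi.single l 1) - c l) ^ 2 ∂p) ∧
    (∀ c : Fin d → ℝ,
        (∫ x, ∑ l, (fderiv ℝ φ x (Pi.single l 1) - c l) ^ 2 ∂p)
          = (∫ x, ∑ l, (fderiv ℝ φ x (Pi.single l 1) - cstar l) ^ 2 ∂p) → c = cstar) :=
  stmt_3_general d p hmom h hmeas C hbdd φ hgradL2 hweak cstar hcstar
end

section
/- Let p : ℝ^d → ℝ and K : ℝ^d → ℝ^{d×s} be twice continuously differentiable, let h : ℝ^d → ℝ^s be continuous, let ĥ ∈ ℝ^s be a constant vector, and let β_1, …, β_M ∈ ℝ. Assume the gain identity Σ_{k=1}^d ∂(p K_{kj})/∂x_k = −(h_j − ĥ_j) p holds on ℝ^d for each j ∈ {1,…,s}. Define Ω_l = (1/2) Σ_{k=1}^d Σ_{j=1}^s K_{kj} ∂K_{lj}/∂x_k and u(x) = −Σ_{m=1}^M β_m K(x) [ (β_m/2) h(x) + (1 − β_m/2) ĥ ] + Σ_{m=1}^M β_m²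 Ω(x). Then on all of ℝ^d, −∇·(p u) + Σ_{m=1}^M β_m² (1/2) Σ_{l,k=1}^d ∂²/∂x_l ∂x_k ( p [K Kᵀ]_{lk} ) = Σ_{m=1}^M β_m [∇·(pK)] ĥ, where [∇·(pK)] ĥ = Σ_{j=1}^s ( Σ_{k=1}^d ∂(p K_{kj})/∂x_k ) ĥ_j = −Σ_{j=1}^s (h_j − ĥ_j) ĥ_j p. -/
/-!
The gain identity `∇·(pK)_j = -(h_j - ĥ_j) p` eliminates `h` from `p u`: pointwise,
`p u_l = (Σ β_m²)/2 · Σ_k ∂_k(p [K Kᵀ]_lk) - (Σ β_m) · p (K ĥ)_l`, where the first term comes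
from the Leibniz rule `∂_k(p K_kj K_lj) = ∂_k(p K_kj) K_lj + p K_kj ∂_k K_lj`. Taking `-∇·` of
this, the second-order term cancels and `(Σ β_m) [∇·(pK)] ĥ` is left.
-/

section

variable {E F : Type*} [NormedAddCommGroup E] [NormedSpace ℝ E]
  [NormedAddCommGroup F] [NormedSpace ℝ F]

theorem ContDiff.differentiable_fderiv_apply {f : E → F} (hf : ContDiff ℝ 2 f) (v : E) :
    Differentiable ℝ fun y => fderiv ℝ f y v :=
  ((hf.fderiv_right le_rfl).clm_apply contDiff_const).differentiable one_ne_zero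

variable {ι κ : Type*} [Fintype ι] [Fintype κ]

theorem sum_fderiv_mul_apply {V : ι → E → ℝ} {φ : E → ℝ} {x : E}
    (hV : ∀ k, DifferentiableAt ℝ (V k) x) (hφ : DifferentiableAt ℝ φ x) (v : ι → E) :
    ∑ k, fderiv ℝ (fun y => V k y * φ y) x (v k)
      = φ x * ∑ k, fderiv ℝ (V k) x (v k) + ∑ k, V k x * fderiv ℝ φ x (v k) := by
  simp only [fderiv_fun_mul (hV _) hφ, add_apply,
    smul_apply, smul_eq_mul, Finset.sum_add_distrib, Finset.mul_sum]
  rw [add_comm]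

theorem sum_fderiv_mul_sum_mul_apply {p : E → ℝ} {K : E → ι → κ → ℝ} {x : E}
    (hp : DifferentiableAt ℝ p x) (hK : ∀ k j, DifferentiableAt ℝ (fun y => K y k j) x)
    (v : ι → E) (l : ι) :
    ∑ k, fderiv ℝ (fun y => p y * ∑ j, K y l j * K y k j) x (v k)
      = ∑ j, K x l j * ∑ k, fderiv ℝ (fun y => p y * K y k j) x (v k)
        + p x * ∑ k, ∑ j, K x k j * fderiv ℝ (fun y => K y l j) x (v k) := by
  have hfun : ∀ k, (fun y => p y * ∑ j, K y l j * K y k j)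
      = fun y => ∑ j, p y * K y k j * K y l j := fun k => by
    funext y; rw [Finset.mul_sum]; exact Finset.sum_congr rfl fun j _ => by ring
  have hpK : ∀ k j, DifferentiableAt ℝ (fun y => p y * K y k j) x :=
    fun k j => hp.fun_mul (hK k j)
  have hsum : ∀ k, fderiv ℝ (fun y => ∑ j, p y * K y k j * K y l j) x (v k)
      = ∑ j, fderiv ℝ (fun y => p y * K y k j * K y l j) x (v k) := fun k => by
    rw [fderiv_fun_sum fun j _ => (hpK k j).fun_mul (hK l j), sum_apply]
  simp only [hfun, hsum]
  rw [Finset.sum_comm]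
  simp only [sum_fderiv_mul_apply (fun k => hpK k _) (hK l _), Finset.sum_add_distrib]
  congr 1
  rw [Finset.sum_comm, Finset.mul_sum]
  refine Finset.sum_congr rfl fun k _ => ?_
  rw [Finset.mul_sum]
  exact Finset.sum_congr rfl fun j _ => by ring

theorem mul_control_eq {μ : Type*} [Fintype μ] {p : E → ℝ} {K : E → ι → κ → ℝ}
    {h : E → κ → ℝ} {hhat : κ → ℝ} {β : μ → ℝ} {Ω u : E → ι → ℝ} {x : E} {v : ι → E}
    (hp : DifferentiableAt ℝ p x) (hK : ∀ k j, DifferentiableAt ℝ (fun y => K y k j) x)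
    (hgain : ∀ j, ∑ k, fderiv ℝ (fun y => p y * K y k j) x (v k) = -((h x j - hhat j) * p x))
    (hΩ : ∀ l, Ω x l = (1 / 2) * ∑ k, ∑ j, K x k j * fderiv ℝ (fun y => K y l j) x (v k))
    (hu : ∀ l, u x l
      = -(∑ m, β m * ∑ j, K x l j * ((β m / 2) * h x j + (1 - β m / 2) * hhat j))
        + ∑ m, (β m) ^ 2 * Ω x l) (l : ι) :
    p x * u x l
      = (∑ m, β m ^ 2) / 2 * ∑ k, fderiv ℝ (fun y => p y * ∑ j, K y l j * K y k j) x (v k)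
        - (∑ m, β m) * ∑ j, hhat j * (p x * K x l j) := by
  set a := ∑ j, K x l j * hhat j
  set b := ∑ j, K x l j * (h x j - hhat j) with hb
  have hsplit : ∀ m, ∑ j, K x l j * ((β m / 2) * h x j + (1 - β m / 2) * hhat j)
      = a + β m / 2 * b := fun m => by
    rw [Finset.mul_sum, ← Finset.sum_add_distrib]
    exact Finset.sum_congr rfl fun j _ => by ring
  have hflux : ∑ j, K x l j * ∑ k, fderiv ℝ (fun y => p y * K y k j) x (v k) = -(p x * b) := by
    simp only [hgain, hb, Finset.mul_sum, ← Finset.sum_neg_distrib]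
    exact Finset.sum_congr rfl fun j _ => by ring
  have hpa : ∑ j, hhat j * (p x * K x l j) = p x * a := by
    rw [Finset.mul_sum]; exact Finset.sum_congr rfl fun j _ => by ring
  have hβ : ∑ m, β m * (a + β m / 2 * b) = (∑ m, β m) * a + (∑ m, β m ^ 2) / 2 * b := by
    rw [Finset.sum_div, Finset.sum_mul, Finset.sum_mul, ← Finset.sum_add_distrib]
    exact Finset.sum_congr rfl fun m _ => by ring
  rw [hu l, hΩ l, sum_fderiv_mul_sum_mul_apply hp hK v l, hflux, hpa]
  simp only [hsplit, hβ, ← Finset.sum_mul]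
  ring

theorem fderiv_mul_control_apply {μ : Type*} [Fintype μ] {p : E → ℝ} {K : E → ι → κ → ℝ}
    {h : E → κ → ℝ} {hhat : κ → ℝ} {β : μ → ℝ} {Ω u : E → ι → ℝ} {v : ι → E}
    (hp : ContDiff ℝ 2 p) (hK : ∀ k j, ContDiff ℝ 2 (fun y => K y k j))
    (hgain : ∀ y j, ∑ k, fderiv ℝ (fun w => p w * K w k j) y (v k) = -((h y j - hhat j) * p y))
    (hΩ : ∀ y l, Ω y l = (1 / 2) * ∑ k, ∑ j, K y k j * fderiv ℝ (fun w => K w l j) y (v k))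
    (hu : ∀ y l, u y l
      = -(∑ m, β m * ∑ j, K y l j * ((β m / 2) * h y j + (1 - β m / 2) * hhat j))
        + ∑ m, (β m) ^ 2 * Ω y l) (l : ι) (x e : E) :
    fderiv ℝ (fun y => p y * u y l) x e
      = (∑ m, β m ^ 2) / 2 * ∑ k, fderiv ℝ (fun y =>
            fderiv ℝ (fun w => p w * ∑ j, K w l j * K w k j) y (v k)) x e
        - (∑ m, β m) * ∑ j, hhat j * fderiv ℝ (fun y => p y * K y l j) x e := by
  have hdp : Differentiable ℝ p := hp.differentiable two_ne_zero
  have hdK : ∀ k j, Differentiable ℝ fun y => K y k j :=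
    fun k j => (hK k j).differentiable two_ne_zero
  have hdT : ∀ k, Differentiable ℝ fun y =>
      fderiv ℝ (fun w => p w * ∑ j, K w l j * K w k j) y (v k) := fun k =>
    (hp.mul (ContDiff.sum fun j _ => (hK l j).mul (hK k j))).differentiable_fderiv_apply _
  -- `u` itself need not be differentiable, but by this identity `p u` is.
  have hpu : (fun y => p y * u y l) = fun y =>
      (∑ m, β m ^ 2) / 2 * ∑ k, fderiv ℝ (fun w => p w * ∑ j, K w l j * K w k j) y (v k)
        - (∑ m, β m) * ∑ j, hhat j * (p y * K y l j) := funext fun y =>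
    mul_control_eq (hdp y) (fun k j => hdK k j y) (hgain y) (hΩ y) (hu y) l
  rw [hpu]
  simp (disch := fun_prop) [fderiv_fun_sub, fderiv_const_mul, fderiv_fun_sum]

end

theorem stmt_5_general (d s M : ℕ)
    (p : (Fin d → ℝ) → ℝ) (hp : ContDiff ℝ 2 p)
    (K : (Fin d → ℝ) → Fin d → Fin s → ℝ)
    (hK : ∀ l j, ContDiff ℝ 2 (fun x => K x l j))
    (h : (Fin d → ℝ) → Fin s → ℝ)
    (hhat : Fin s → ℝ) (β : Fin M → ℝ)
    (hgain : ∀ x j, (∑ k, fderiv ℝ (fun y => p y * K y k j) x (Pi.single k 1))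
        = -((h x j - hhat j) * p x))
    (Ω : (Fin d → ℝ) → Fin d → ℝ)
    (hΩ : ∀ x l, Ω x l
      = (1 / 2) * ∑ k, ∑ j, K x k j * fderiv ℝ (fun y => K y l j) x (Pi.single k 1))
    (u : (Fin d → ℝ) → Fin d → ℝ)
    (hu : ∀ x l, u x l
      = -(∑ m, β m * ∑ j, K x l j * ((β m / 2) * h x j + (1 - β m / 2) * hhat j))
        + ∑ m, (β m) ^ 2 * Ω x l) :
    ∀ x,
      ((-(∑ l, fderiv ℝ (fun y => p y * u y l) x (Pi.single l 1))
        + ∑ m, (β m) ^ 2 * ((1 / 2) * ∑ l, ∑ k,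
            fderiv ℝ (fun y =>
              fderiv ℝ (fun w => p w * ∑ j, K w l j * K w k j) y (Pi.single k 1))
              x (Pi.single l 1)))
        = ∑ m, β m * ∑ j,
            (∑ k, fderiv ℝ (fun w => p w * K w k j) x (Pi.single k 1)) * hhat j) ∧
      ((∑ j, (∑ k, fderiv ℝ (fun w => p w * K w k j) x (Pi.single k 1)) * hhat j)
        = -∑ j, (h x j - hhat j) * hhat j * p x) := by
  intro x
  have hswap : ∑ l, ∑ j, hhat j * fderiv ℝ (fun y => p y * K y l j) x (Pi.single l 1)
      = ∑ j, (∑ k, fderiv ℝ (fun w => p w * K w k j) x (Pi.single k 1)) * hhat j := by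
    rw [Finset.sum_comm]
    exact Finset.sum_congr rfl fun j _ => by rw [mul_comm, Finset.mul_sum]
  constructor
  · simp only [fderiv_mul_control_apply hp hK hgain hΩ hu]
    rw [Finset.sum_sub_distrib, ← Finset.mul_sum, ← Finset.mul_sum, hswap, ← Finset.sum_mul,
      ← Finset.sum_mul]
    ring
  · simp only [hgain x, ← Finset.sum_neg_distrib]
    exact Finset.sum_congr rfl fun j _ => by ring

/-- Key identity in the consistency proof of PDA-FPF (Theorem 1 of the paper):
assuming the gain identity `∇·(pK)_j = -(h_j - ĥ_j) p`, the drift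
`u = -Σ_m β_m K [(β_m/2) h + (1 - β_m/2) ĥ] + Σ_m β_m² Ω` satisfies
`-∇·(pu) + Σ_m β_m² (1/2) Σ_{l,k} ∂²/∂x_l∂x_k (p [K Kᵀ]_lk) = Σ_m β_m [∇·(pK)] ĥ`,
and `[∇·(pK)] ĥ = -Σ_j (h_j - ĥ_j) ĥ_j p`. -/
theorem stmt_5 (d s M : ℕ)
    (p : (Fin d → ℝ) → ℝ) (hp : ContDiff ℝ 2 p)
    (K : (Fin d → ℝ) → Fin d → Fin s → ℝ)
    (hK : ∀ l j, ContDiff ℝ 2 (fun x => K x l j))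
    (h : (Fin d → ℝ) → Fin s → ℝ) (hh : ∀ j, Continuous (fun x => h x j))
    (hhat : Fin s → ℝ) (β : Fin M → ℝ)
    (hgain : ∀ x j, (∑ k, fderiv ℝ (fun y => p y * K y k j) x (Pi.single k 1))
        = -((h x j - hhat j) * p x))
    (Ω : (Fin d → ℝ) → Fin d → ℝ)
    (hΩ : ∀ x l, Ω x l
      = (1 / 2) * ∑ k, ∑ j, K x k j * fderiv ℝ (fun y => K y l j) x (Pi.single k 1))
    (u : (Fin d → ℝ) → Fin d → ℝ)
    (hu : ∀ x l, u x l
      = -(∑ m, β m * ∑ j, K x l j * ((β m / 2) * h x j + (1 - β m / 2) * hhat j))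
        + ∑ m, (β m) ^ 2 * Ω x l) :
    ∀ x,
      ((-(∑ l, fderiv ℝ (fun y => p y * u y l) x (Pi.single l 1))
        + ∑ m, (β m) ^ 2 * ((1 / 2) * ∑ l, ∑ k,
            fderiv ℝ (fun y =>
              fderiv ℝ (fun w => p w * ∑ j, K w l j * K w k j) y (Pi.single k 1))
              x (Pi.single l 1)))
        = ∑ m, β m * ∑ j,
            (∑ k, fderiv ℝ (fun w => p w * K w k j) x (Pi.single k 1)) * hhat j) ∧
      ((∑ j, (∑ k, fderiv ℝ (fun w => p w * K w k j) x (Pi.single k 1)) * hhat j)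
        = -∑ j, (h x j - hhat j) * hhat j * p x) :=
  stmt_5_general d s M p hp K hK h hhat β hgain Ω hΩ u hu
end

section
/- Under the setup of the association-probability likelihood-ratio functions: for every m, j ∈ {1,…,M}, the second partial derivative of E^m with respect to z_j (twice) at (0,0) equals (1 − β^m) ĥ₂ − 2 β^m (1 − β^m) ĥ² if j = m, and equals 2 (β^j)² ĥ² − β^j ĥ₂ if j ≠ m. -/
/-! On the slice `t = 0`, `z = v e_j`, each `N_l` with `l ≠ j` is identically `1` and `N_j` is the
moment generating function `F` of `h` under `p`. Hence `D = c F + d` with `c = β^j`, `d = 1 - β^j`,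
and `E^m = (a F + b) / (c F + d)` is a Möbius transformation of `F`, where `(a, b) = (1, 0)` if
`j = m` and `(0, 1)` otherwise. The second-order chain rule at `F 0 = 1`, with `F' 0 = ĥ` and
`F'' 0 = ĥ₂`, gives `(a d - b c) (ĥ₂ - 2 c ĥ²)`. -/

open Filter MeasureTheory ProbabilityTheory Topology

theorem hasDerivAt_deriv_comp {φ φ' F F' : ℝ → ℝ} {φ'' F'' x : ℝ}
    (hφ : ∀ᶠ y in 𝓝 x, HasDerivAt φ (φ' (F y)) (F y))
    (hF : ∀ᶠ y in 𝓝 x, HasDerivAt F (F' y) y)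
    (hφ' : HasDerivAt φ' φ'' (F x)) (hF' : HasDerivAt F' F'' x) :
    HasDerivAt (deriv fun y => φ (F y)) (φ'' * F' x ^ 2 + φ' (F x) * F'') x := by
  have hderiv : (deriv fun y => φ (F y)) =ᶠ[𝓝 x] fun y => φ' (F y) * F' y := by
    filter_upwards [hφ, hF] with y hφy hFy using (hφy.comp y hFy).deriv
  rw [hderiv.hasDerivAt_iff]
  refine ((hφ'.comp x hF.self_of_nhds).mul hF').congr_deriv ?_
  simp only [Function.comp_apply]
  ring

theorem hasDerivAt_moebius (a b c d : ℝ) {y : ℝ} (hy : c * y + d ≠ 0) :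
    HasDerivAt (fun y => (a * y + b) / (c * y + d)) ((a * d - b * c) / (c * y + d) ^ 2) y := by
  refine ((((hasDerivAt_id' y).const_mul a).add_const b).div
    (((hasDerivAt_id' y).const_mul c).add_const d) hy).congr_deriv ?_
  ring

theorem hasDerivAt_const_div_affine_sq (k c d : ℝ) {y : ℝ} (hy : c * y + d ≠ 0) :
    HasDerivAt (fun y => k / (c * y + d) ^ 2) (-2 * c * k / (c * y + d) ^ 3) y := by
  refine ((hasDerivAt_const y k).div ((((hasDerivAt_id' y).const_mul c).add_const d).pow 2)
    (pow_ne_zero 2 hy)).congr_deriv ?_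
  field_simp
  simp only [Pi.pow_apply]
  ring

theorem sum_mul_comp_update_zero {ι : Type*} [Fintype ι] [DecidableEq ι] (β : ι → ℝ)
    (f : ℝ → ℝ) (j : ι) (v : ℝ) :
    ∑ l, β l * f (Function.update (0 : ι → ℝ) j v l) = β j * f v + (∑ l, β l - β j) * f 0 := by
  have hupdate : (fun l => β l * f (Function.update (0 : ι → ℝ) j v l))
      = Function.update (fun l => β l * f 0) j (β j * f v) := by
    ext l
    rcases eq_or_ne l j with rfl | hl <;> simp [*]
  rw [hupdate, Finset.sum_update_of_mem (Finset.mem_univ j), ← Finset.sum_mul,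
    Finset.sum_sdiff_eq_sub (Finset.subset_univ _), Finset.sum_singleton]

section MGF

variable {Ω : Type*} {mΩ : MeasurableSpace Ω} {μ : Measure Ω} {X : Ω → ℝ}

theorem integrableExpSet_eq_univ_of_abs_le [IsFiniteMeasure μ] {C : ℝ} (hX : AEMeasurable X μ)
    (hC : ∀ᵐ ω ∂μ, |X ω| ≤ C) : integrableExpSet X μ = Set.univ := by
  refine Set.eq_univ_of_forall fun t => ?_
  refine Integrable.of_bound (hX.const_mul t).exp.aestronglyMeasurable (Real.exp (|t| * C)) ?_
  filter_upwards [hC] with ω hω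
  rw [Real.norm_eq_abs, Real.abs_exp, Real.exp_le_exp]
  calc t * X ω ≤ |t| * |X ω| := (le_abs_self _).trans (abs_mul _ _).le
    _ ≤ |t| * C := mul_le_mul_of_nonneg_left hω (abs_nonneg t)

theorem hasDerivAt_deriv_mgf {t : ℝ} (ht : t ∈ interior (integrableExpSet X μ)) :
    HasDerivAt (deriv (mgf X μ)) μ[fun ω => X ω ^ 2 * Real.exp (t * X ω)] t := by
  simpa using hasDerivAt_iteratedDeriv_mgf ht 1

theorem deriv_deriv_moebius_comp_mgf [IsProbabilityMeasure μ]
    (h0 : 0 ∈ interior (integrableExpSet X μ)) (a b : ℝ) {c d : ℝ} (hc : 0 ≤ c) (hd : 0 ≤ d)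
    (hcd : c + d = 1) :
    deriv (deriv fun t => (a * mgf X μ t + b) / (c * mgf X μ t + d)) 0
      = (a * d - b * c) * (μ[X ^ 2] - 2 * c * μ[X] ^ 2) := by
  have hnear : ∀ᶠ t in 𝓝 0, t ∈ interior (integrableExpSet X μ) :=
    isOpen_interior.eventually_mem h0
  have hden : ∀ t ∈ integrableExpSet X μ, c * mgf X μ t + d ≠ 0 := by
    intro t ht
    have hpos := mgf_pos (X := X) (μ := μ) ht
    rcases hc.lt_or_eq with hc | rfl
    · positivity
    · simp_all
  have key := hasDerivAt_deriv_comp (F := mgf X μ) (F' := deriv (mgf X μ))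
    (hnear.mono fun t ht => hasDerivAt_moebius a b c d (hden t (interior_subset ht)))
    (hnear.mono fun t ht => (hasDerivAt_mgf ht).differentiableAt.hasDerivAt)
    (hasDerivAt_const_div_affine_sq (a * d - b * c) c d (hden 0 (interior_subset h0)))
    (hasDerivAt_deriv_mgf h0)
  rw [key.deriv, mgf_zero, deriv_mgf_zero h0, mul_one, hcd]
  simp only [zero_mul, Real.exp_zero, mul_one, one_pow, div_one, Pi.pow_apply]
  ring

end MGF

theorem stmt_12_general (d M : ℕ) (p : Measure (Fin d → ℝ)) [IsProbabilityMeasure p]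
    (h : (Fin d → ℝ) → ℝ) (hmeas : Measurable h) (C : ℝ) (hbdd : ∀ x, |h x| ≤ C)
    (β0 : ℝ) (β : Fin M → ℝ)
    (hβ : ∀ m, 0 ≤ β m ∧ β m ≤ 1)
    (hsum : β0 + ∑ m, β m = 1)
    (N : Fin M → ℝ × (Fin M → ℝ) → ℝ)
    (hN : ∀ l tz, N l tz = ∫ x, Real.exp (h x * tz.2 l - (h x) ^ 2 * tz.1 / 2) ∂p)
    (D : ℝ × (Fin M → ℝ) → ℝ)
    (hD : ∀ tz, D tz = (∑ l, β l * N l tz) + β0)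
    (E : Fin M → ℝ × (Fin M → ℝ) → ℝ)
    (hE : ∀ m tz, E m tz = N m tz / D tz) :
    ∀ m j : Fin M,
      deriv (fun w =>
          deriv (fun v => E m (0, Function.update (0 : Fin M → ℝ) j v)) w) 0
        = if j = m then
            (1 - β m) * (∫ x, (h x) ^ 2 ∂p)
              - 2 * β m * (1 - β m) * (∫ x, h x ∂p) ^ 2
          else
            2 * (β j) ^ 2 * (∫ x, h x ∂p) ^ 2 - β j * ∫ x, (h x) ^ 2 ∂p := by
  intro m j
  have hN0 : ∀ l z, N l (0, z) = mgf h p (z l) := fun l z => by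
    simp [hN, mgf, mul_comm]
  have hE0 : ∀ v, E m (0, Function.update 0 j v) = ((if j = m then 1 else 0) * mgf h p v
      + (if j = m then 0 else 1)) / (β j * mgf h p v + (1 - β j)) := fun v => by
    rw [hE, hD]
    simp only [hN0]
    rw [sum_mul_comp_update_zero, mgf_zero, show ∑ l, β l = 1 - β0 by linarith]
    rcases eq_or_ne j m with rfl | hjm
    · simp only [Function.update_self, if_true]
      ring_nf
    · simp only [Function.update_of_ne hjm.symm, Pi.zero_apply, mgf_zero, if_neg hjm]
      ring_nf
  have hh : integrableExpSet h p = Set.univ :=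
    integrableExpSet_eq_univ_of_abs_le hmeas.aemeasurable (ae_of_all _ hbdd)
  simp_rw [hE0]
  rw [deriv_deriv_moebius_comp_mgf (by simp [hh]) _ _ (hβ j).1 (by linarith [(hβ j).2])
    (by ring)]
  simp only [Pi.pow_apply]
  split_ifs with hjm
  · subst hjm
    ring
  · ring

/-- Association-probability likelihood-ratio functions: for every
`m, j ∈ {1,…,M}`, the second partial derivative of `E^m = N_m / D` with respect
to the coordinate `z_j` (twice) at `(0,0)` equals
`(1 - β^m) ĥ₂ - 2 β^m (1 - β^m) ĥ²` if `j = m` and `2 (β^j)² ĥ² - β^j ĥ₂`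
otherwise, where `ĥ = ∫ h dp` and `ĥ₂ = ∫ h² dp`. -/
theorem stmt_12 (d M : ℕ) (p : Measure (Fin d → ℝ)) [IsProbabilityMeasure p]
    (h : (Fin d → ℝ) → ℝ) (hmeas : Measurable h) (C : ℝ) (hbdd : ∀ x, |h x| ≤ C)
    (β0 : ℝ) (β : Fin M → ℝ)
    (hβ0 : 0 ≤ β0 ∧ β0 ≤ 1) (hβ : ∀ m, 0 ≤ β m ∧ β m ≤ 1)
    (hsum : β0 + ∑ m, β m = 1)
    (N : Fin M → ℝ × (Fin M → ℝ) → ℝ)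
    (hN : ∀ l tz, N l tz = ∫ x, Real.exp (h x * tz.2 l - (h x) ^ 2 * tz.1 / 2) ∂p)
    (D : ℝ × (Fin M → ℝ) → ℝ)
    (hD : ∀ tz, D tz = (∑ l, β l * N l tz) + β0)
    (E : Fin M → ℝ × (Fin M → ℝ) → ℝ)
    (hE : ∀ m tz, E m tz = N m tz / D tz) :
    ∀ m j : Fin M,
      deriv (fun w =>
          deriv (fun v => E m (0, Function.update (0 : Fin M → ℝ) j v)) w) 0
        = if j = m then
            (1 - β m) * (∫ x, (h x) ^ 2 ∂p)
              - 2 * β m * (1 - β m) * (∫ x, h x ∂p) ^ 2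
          else
            2 * (β j) ^ 2 * (∫ x, h x ∂p) ^ 2 - β j * ∫ x, (h x) ^ 2 ∂p :=
  stmt_12_general d M p h hmeas C hbdd β0 β hβ hsum N hN D hD E hE
end
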